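/- arXiv:1610.00742 — 5 statements merged into one kernel-verified Lean document; each statement's English description precedes it below -/
import Mathlib

section
/- Let M be a fine monoid (a finitely generated, cancellative commutative monoid, written additively) and let x be a non-invertible element of M. Then the set of integers ρ ≥ 1 such that the class of x in the sharpification M^♯ is divisible by ρ (i.e. equals ρ·m for some m ∈ M^♯) is nonempty and bounded above; in particular it has a largest element. (This makes the root index of any monoid morphism φ : ℕ → M well-defined.) -/
/-!
A homomorphism `f : M →+ ℤ` that kills the units of `M` turns `x + u = ρ • m + v` into
`f x = ρ * f m`, so every `ρ` dividing the class of `x` in `M^♯` divides `f x`; it remains to find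
such an `f` with `f x ≠ 0`. Since `M` is cancellative it embeds into its Grothendieck group `G`,
and `x` is not a unit, so no positive multiple of `x` lies in the image `U` of the units of `M`.
Thus `x` has infinite order in the finitely generated abelian group `G ⧸ U`, and a coordinate of
its free part `(G ⧸ U) ⧸ torsion` is nonzero on `x`.
-/

/-- The class of `x` in the sharpification `M^♯ = M/M^×` is divisible by `k`:
there are `m` in `M` and invertible elements `u, v` with `x + u = k • m + v`. -/
def SharpDvd {M : Type*} [AddCommMonoid M] (k : ℕ) (x : M) : Prop :=
  ∃ m u v : M, IsAddUnit u ∧ IsAddUnit v ∧ x + u = k • m + v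

theorem SharpDvd.natCast_dvd {M : Type*} [AddCommMonoid M] {k : ℕ} {x : M} (h : SharpDvd k x)
    (f : M →+ ℤ) (hf : ∀ u, IsAddUnit u → f u = 0) : (k : ℤ) ∣ f x := by
  obtain ⟨m, u, v, hu, hv, h⟩ := h
  exact ⟨f m, by simpa [hf u hu, hf v hv] using congrArg f h⟩

theorem AddCommGroup.exists_addMonoidHom_int_ne_zero {G : Type*} [AddCommGroup G]
    [AddGroup.FG G] {g : G} (hg : ¬ IsOfFinAddOrder g) : ∃ φ : G →+ ℤ, φ g ≠ 0 := by
  have hg' : (Submodule.torsion ℤ G).mkQ g ≠ 0 := by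
    rwa [Submodule.mkQ_apply, ne_eq, Submodule.Quotient.mk_eq_zero,
      ← Submodule.mem_toAddSubgroup, Submodule.torsion_int]
  obtain ⟨φ, hφ⟩ := Module.Projective.exists_dual_ne_zero ℤ hg'
  exact ⟨(φ ∘ₗ (Submodule.torsion ℤ G).mkQ).toAddMonoidHom, hφ⟩

open Algebra in
theorem exists_addMonoidHom_int_ne_zero_of_not_isAddUnit {M : Type*} [AddCancelCommMonoid M]
    [AddMonoid.FG M] {x : M} (hx : ¬ IsAddUnit x) :
    ∃ f : M →+ ℤ, f x ≠ 0 ∧ ∀ u, IsAddUnit u → f u = 0 := by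
  let ι := GrothendieckAddGroup.of (M := M)
  let U : AddSubgroup (GrothendieckAddGroup M) := (ι.comp (AddUnits.coeHom M)).range
  have mem_U {y : M} : ι y ∈ U ↔ IsAddUnit y :=
    ⟨fun ⟨u, hu⟩ => ⟨u, GrothendieckAddGroup.of_injective hu⟩, fun ⟨u, hu⟩ => ⟨u, by simp [← hu]⟩⟩
  have : AddGroup.FG (GrothendieckAddGroup M) := AddGroup.fg_iff_addMonoid_fg.2 inferInstance
  have : AddGroup.FG (GrothendieckAddGroup M ⧸ U) :=
    AddGroup.fg_of_surjective (QuotientAddGroup.mk'_surjective U)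
  have hinf : ¬ IsOfFinAddOrder (QuotientAddGroup.mk' U (ι x)) := by
    rw [isOfFinAddOrder_iff_nsmul_eq_zero]
    rintro ⟨n, hn, h⟩
    rw [← map_nsmul, ← map_nsmul, QuotientAddGroup.mk'_apply, QuotientAddGroup.eq_zero_iff, mem_U,
      isAddUnit_nsmul_iff hn.ne'] at h
    exact hx h
  obtain ⟨φ, hφ⟩ := AddCommGroup.exists_addMonoidHom_int_ne_zero hinf
  refine ⟨(φ.comp (QuotientAddGroup.mk' U)).comp ι, hφ, fun u hu => ?_⟩
  simp [(QuotientAddGroup.eq_zero_iff _).2 (mem_U.2 hu)]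

/-- Let `M` be a fine monoid (finitely generated, cancellative, commutative) and `x` a
non-invertible element of `M`.  Then the set of integers `ρ ≥ 1` such that the class of `x`
in the sharpification `M^♯` is divisible by `ρ` is nonempty and bounded above; in particular
it has a largest element.  (This makes the root index well-defined.) -/
theorem rootIndex_welldefined (M : Type*) [AddCancelCommMonoid M] [AddMonoid.FG M]
    (x : M) (hx : ¬ IsAddUnit x) :
    ({ρ : ℕ | 1 ≤ ρ ∧ SharpDvd ρ x}).Nonempty ∧
    BddAbove {ρ : ℕ | 1 ≤ ρ ∧ SharpDvd ρ x} ∧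
    ∃ g : ℕ, IsGreatest {ρ : ℕ | 1 ≤ ρ ∧ SharpDvd ρ x} g := by
  obtain ⟨f, hfx, hfu⟩ := exists_addMonoidHom_int_ne_zero_of_not_isAddUnit hx
  have hne : {ρ : ℕ | 1 ≤ ρ ∧ SharpDvd ρ x}.Nonempty :=
    ⟨1, le_rfl, x, 0, 0, isAddUnit_zero, isAddUnit_zero, by simp⟩
  have hbdd : BddAbove {ρ : ℕ | 1 ≤ ρ ∧ SharpDvd ρ x} :=
    ⟨(f x).natAbs, fun _ ⟨_, hρ⟩ =>
      Nat.le_of_dvd (Int.natAbs_pos.2 hfx) (Int.natCast_dvd.1 (hρ.natCast_dvd f hfu))⟩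
  exact ⟨hne, hbdd, hbdd.exists_isGreatest_of_nonempty hne⟩
end

section
/- Let M be a fine and saturated monoid and let φ : ℕ → M be a morphism of monoids. Then for every integer d ≥ 1, the amalgamated sum M(d) = M ⊕_ℕ (1/d)ℕ (the pushout in commutative monoids of φ : ℕ → M and the inclusion ℕ ↪ (1/d)ℕ, equivalently of φ and the multiplication-by-d map ℕ → ℕ) is a fine monoid, i.e. it is finitely generated and cancellative. -/
/-- A cancellative commutative monoid `M` is *saturated* if whenever an element `x` of the
groupification `M^gp` (written as a formal difference `a - b` of elements of `M`) satisfies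
`k • x ∈ M` for some `k ≥ 1`, then `x ∈ M`. -/
def IsSaturatedAddMonoid (M : Type*) [AddCommMonoid M] : Prop :=
  ∀ a b : M, ∀ k : ℕ, 1 ≤ k → (∃ c : M, k • a = k • b + c) → ∃ c : M, a = b + c

/-- The congruence on `M ⊕ ℕ` presenting the pushout `M(d) = M ⊕_ℕ (1/d)ℕ` of
`φ : ℕ → M` and the inclusion `ℕ ↪ (1/d)ℕ` (identifying `(1/d)ℕ ≅ ℕ` via `1/d ↦ 1`, so that
the inclusion becomes multiplication by `d`): it is generated by `(φ(1), 0) ~ (0, d)`. -/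
def pushoutCon {M : Type*} [AddCommMonoid M] (φ : ℕ →+ M) (d : ℕ) : AddCon (M × ℕ) :=
  addConGen (fun p q => p = (φ 1, (0 : ℕ)) ∧ q = ((0 : M), d))

/-- The pushout `M(d) = M ⊕_ℕ (1/d)ℕ` in commutative monoids. -/
abbrev MdMonoid {M : Type*} [AddCommMonoid M] (φ : ℕ →+ M) (d : ℕ) :=
  (pushoutCon φ d).Quotient

/-!
The pushout relation can be written down explicitly: `(m, n) ~ (m', n')` if and only if
`m + φ l = m' + φ k` and `n + k d = n' + l d` for some `k l : ℕ`, i.e. the two pairs become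
equal after trading `φ k` for `k d` on one side and `φ l` for `l d` on the other. This explicit
relation is visibly compatible with cancellation in `M` and in `ℕ`, so `M(d)` is cancellative.
That it is no larger than the generated congruence again uses cancellation in `M`, which
reduces `φ l` against `φ k` to a single `φ j`.
-/

namespace MdMonoid

variable {M : Type*}

section AddCommMonoid

variable [AddCommMonoid M] (φ : ℕ →+ M) (d : ℕ)

instance [AddMonoid.FG M] : AddMonoid.FG (MdMonoid φ d) :=
  AddMonoid.fg_of_surjective (pushoutCon φ d).mk' AddCon.mk'_surjective

def explicitCon : AddCon (M × ℕ) where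
  r p q := ∃ k l : ℕ, p.1 + φ l = q.1 + φ k ∧ p.2 + k * d = q.2 + l * d
  iseqv.refl _ := ⟨0, 0, rfl, rfl⟩
  iseqv.symm := fun ⟨k, l, h₁, h₂⟩ => ⟨l, k, h₁.symm, h₂.symm⟩
  iseqv.trans := by
    rintro p q s ⟨k, l, h₁, h₂⟩ ⟨k', l', h₃, h₄⟩
    refine ⟨k + k', l + l', ?_, by linarith⟩
    calc p.1 + φ (l + l') = (p.1 + φ l) + φ l' := by rw [map_add, add_assoc]
      _ = (q.1 + φ l') + φ k := by rw [h₁, add_right_comm]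
      _ = s.1 + φ (k + k') := by rw [h₃, map_add, add_right_comm, add_assoc]
  add' := by
    rintro p q p' q' ⟨k, l, h₁, h₂⟩ ⟨k', l', h₃, h₄⟩
    refine ⟨k + k', l + l', ?_, by simp only [Prod.snd_add]; linarith⟩
    simp only [Prod.fst_add, map_add]
    rw [add_add_add_comm p.1, h₁, h₃, add_add_add_comm]

theorem pushoutCon_le_explicitCon : pushoutCon φ d ≤ explicitCon φ d :=
  AddCon.addConGen_le.mpr <| by
    rintro p q ⟨rfl, rfl⟩
    exact ⟨1, 0, by simp, by simp⟩

theorem pushoutCon_add_apply_nat (x : M) (y j : ℕ) :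
    pushoutCon φ d (x + φ j, y) (x, y + j * d) := by
  have hgen : pushoutCon φ d (φ 1, 0) (0, d) := AddConGen.Rel.of _ _ ⟨rfl, rfl⟩
  simpa [← AddMonoidHom.map_nsmul] using
    (pushoutCon φ d).add ((pushoutCon φ d).refl (x, y)) ((pushoutCon φ d).nsmul j hgen)

end AddCommMonoid

section AddCancelCommMonoid

variable [AddCancelCommMonoid M] (φ : ℕ →+ M) (d : ℕ)

theorem explicitCon_le_pushoutCon : explicitCon φ d ≤ pushoutCon φ d := by
  rintro ⟨m, n⟩ ⟨m', n'⟩ ⟨k, l, h₁, h₂⟩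
  wlog hlk : l ≤ k generalizing m n m' n' k l
  · exact (pushoutCon φ d).symm (this m' n' m n l k h₁.symm h₂.symm (le_of_not_ge hlk))
  obtain ⟨j, rfl⟩ := Nat.exists_eq_add_of_le hlk
  have hm : m = m' + φ j :=
    add_right_cancel (b := φ l) (by rw [h₁, map_add, add_comm (φ l), add_assoc])
  have hn : n' = n + j * d := by simp only [add_mul] at h₂; omega
  rw [hm, hn]
  exact pushoutCon_add_apply_nat φ d m' n j

theorem pushoutCon_eq_explicitCon : pushoutCon φ d = explicitCon φ d :=
  le_antisymm (pushoutCon_le_explicitCon φ d) (explicitCon_le_pushoutCon φ d)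

theorem pushoutCon_of_add_left {x y z : M × ℕ} (h : pushoutCon φ d (x + y) (x + z)) :
    pushoutCon φ d y z := by
  rw [pushoutCon_eq_explicitCon] at h ⊢
  obtain ⟨k, l, h₁, h₂⟩ := h
  simp only [Prod.fst_add, Prod.snd_add, add_assoc] at h₁ h₂
  exact ⟨k, l, add_left_cancel h₁, by omega⟩

instance : IsLeftCancelAdd (MdMonoid φ d) where
  add_left_cancel a b c h := by
    induction a using AddCon.induction_on
    induction b using AddCon.induction_on
    induction c using AddCon.induction_on
    beta_reduce at h
    rw [← AddCon.coe_add, ← AddCon.coe_add, AddCon.eq] at h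
    exact (AddCon.eq _).mpr (pushoutCon_of_add_left φ d h)

end AddCancelCommMonoid

end MdMonoid

theorem Md_is_fine_general (M : Type*) [AddCancelCommMonoid M] [AddMonoid.FG M]
    (φ : ℕ →+ M) (d : ℕ) :
    AddMonoid.FG (MdMonoid φ d) ∧
      ∀ a b c : MdMonoid φ d, a + b = a + c → b = c :=
  ⟨inferInstance, fun _ _ _ => add_left_cancel⟩

/-- Let `M` be a fine and saturated monoid and `φ : ℕ → M` a morphism of monoids.  Then for
every integer `d ≥ 1` the amalgamated sum `M(d) = M ⊕_ℕ (1/d)ℕ` is a fine monoid: it is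
finitely generated and cancellative. -/
theorem Md_is_fine (M : Type*) [AddCancelCommMonoid M] [AddMonoid.FG M]
    (hsat : IsSaturatedAddMonoid M) (φ : ℕ →+ M) (d : ℕ) (hd : 1 ≤ d) :
    AddMonoid.FG (MdMonoid φ d) ∧
      ∀ a b c : MdMonoid φ d, a + b = a + c → b = c :=
  Md_is_fine_general M φ d
end

section
/- Let M be a sharp, fine and saturated monoid, let m ∈ M^gp and let n ∈ M ∖ {0}. Let u_1, …, u_r be the generators of the one-dimensional faces of the dual monoid M^∨ = Hom(M, ℕ), and let I ⊆ {1, …, r} be the set of indices i such that u_i(n) > 0. Assume that u_j^gp(m) = 1 for every j ∉ I. Then: (1) u(n) ≥ 1 for every u ∈ M^{∨,loc}; (2) for every integer k ≥ 1, the function u ↦ u^gp(m) is bounded below on the set {u ∈ M^{∨,loc} : u(n) = k}; and (3) for every k ≥ 1 and every j ∈ ℤ, the set {u ∈ M^{∨,loc} : u(n) = k and u^gp(m) = j} is finite. Consequently, the series Σ_{u ∈ M^{∨,loc}} L^{−u^gp(m)} T^{u(n)} is a well-defined element of ℤ((L^{−1}))[[T]] with zero constant term in T. -/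
/-- The congruence on `N × N` presenting the groupification (Grothendieck group) of the
commutative monoid `N`; the pair `(a, b)` represents the formal difference `a - b`. -/
def grpCon (N : Type*) [AddCommMonoid N] : AddCon (N × N) where
  r p q := ∃ k : N, p.1 + q.2 + k = q.1 + p.2 + k
  iseqv := by
    refine ⟨fun p => ⟨0, rfl⟩, ?_, ?_⟩
    · rintro p q ⟨k, h⟩; exact ⟨k, h.symm⟩
    · rintro p q s ⟨k, h⟩ ⟨l, h'⟩
      refine ⟨q.1 + q.2 + k + l, ?_⟩
      calc p.1 + s.2 + (q.1 + q.2 + k + l)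
          = (p.1 + q.2 + k) + (q.1 + s.2 + l) := by abel
        _ = (q.1 + p.2 + k) + (q.1 + s.2 + l) := by rw [h]
        _ = (q.1 + p.2 + k) + (s.1 + q.2 + l) := by rw [h']
        _ = s.1 + p.2 + (q.1 + q.2 + k + l) := by abel
  add' := by
    rintro p q p' q' ⟨k, h⟩ ⟨l, h'⟩
    refine ⟨k + l, ?_⟩
    simp only [Prod.fst_add, Prod.snd_add]
    calc p.1 + p'.1 + (q.2 + q'.2) + (k + l)
        = (p.1 + q.2 + k) + (p'.1 + q'.2 + l) := by abel
      _ = (q.1 + p.2 + k) + (q'.1 + p'.2 + l) := by rw [h, h']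
      _ = q.1 + q'.1 + (p.2 + p'.2) + (k + l) := by abel

/-- The groupification `N^gp` of a commutative monoid `N`. -/
abbrev GrpOf (N : Type*) [AddCommMonoid N] := (grpCon N).Quotient

/-- A morphism of monoids `u : N → ℕ` is *local* if `u(x) ≠ 0` for every non-invertible
element `x` of `N` (for a sharp monoid, for every `x ≠ 0`). -/
def IsLocalAddHom {N : Type*} [AddCommMonoid N] (u : N →+ ℕ) : Prop :=
  ∀ x : N, ¬ IsAddUnit x → u x ≠ 0

/-- A *face* of the dual monoid `M^∨ = Hom(M, ℕ)` is a submonoid `F` such that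
`x + y ∈ F` implies `x ∈ F` and `y ∈ F`. -/
def IsFace {M : Type*} [AddCommMonoid M] (F : AddSubmonoid (M →+ ℕ)) : Prop :=
  ∀ x y : M →+ ℕ, x + y ∈ F → x ∈ F ∧ y ∈ F

/-- A *one-dimensional face* of `M^∨`: a face `F ≠ {0}` whose groupification has rank one,
i.e. any two elements of `F` satisfy a nontrivial relation `a • x = b • y`. -/
def IsOneDimFace {M : Type*} [AddCommMonoid M] (F : AddSubmonoid (M →+ ℕ)) : Prop :=
  IsFace F ∧ F ≠ ⊥ ∧
    ∀ x ∈ F, ∀ y ∈ F, ∃ a b : ℕ, ¬(a = 0 ∧ b = 0) ∧ a • x = b • y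

/-- The coefficient ring `ℤ((L⁻¹))` of formal Laurent series in `L⁻¹`: a Laurent series in
the variable `X = L⁻¹`.  The exponent `a ∈ ℤ` of `X` corresponds to the monomial `L^{-a}`. -/
abbrev RL : Type := LaurentSeries ℤ

/-- The element `L` of `ℤ((L⁻¹))`, i.e. `X⁻¹` where `X = L⁻¹`. -/
noncomputable def Lvar : RL := HahnSeries.single (-1 : ℤ) (1 : ℤ)

/-- The element `L⁻¹` of `ℤ((L⁻¹))`. -/
noncomputable def Lvarinv : RL := HahnSeries.single (1 : ℤ) (1 : ℤ)

/-- The monomial `L^{-a} T^b` in the ring `ℤ((L⁻¹))[[T]]`. -/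
noncomputable def LTmonomial (a : ℤ) (b : ℕ) : PowerSeries RL :=
  (PowerSeries.monomial b) (HahnSeries.single a (1 : ℤ))

/-- The set of local morphisms `u : M → ℕ` with `u(n) = b` and `u^gp(m) = a`, where the
element `m` of `M^gp` is written as the formal difference `m = m₁ - m₂` with `m₁, m₂ ∈ M`
(so that `u^gp(m) = u(m₁) - u(m₂)`). -/
def localLevelSet {M : Type*} [AddCommMonoid M] (m₁ m₂ n : M) (b : ℕ) (a : ℤ) :
    Set (M →+ ℕ) :=
  {u | IsLocalAddHom u ∧ u n = b ∧ (u m₁ : ℤ) - (u m₂ : ℤ) = a}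

/-- `G ∈ ℤ((L⁻¹))[[T]]` is the series `Σ_{u ∈ M^{∨,loc}} L^{-u^gp(m)} T^{u(n)}`: for all
`b` and `a`, only finitely many local `u` satisfy `u(n) = b`, `u^gp(m) = a`, and the
coefficient of `L^{-a} T^b` in `G` is the number of such `u`. -/
def IsLocalDualSeries {M : Type*} [AddCommMonoid M] (m₁ m₂ n : M)
    (G : PowerSeries RL) : Prop :=
  ∀ b : ℕ, ∀ a : ℤ, (localLevelSet m₁ m₂ n b a).Finite ∧
    ((PowerSeries.coeff b) G).coeff a = (Nat.card (localLevelSet m₁ m₂ n b a) : ℤ)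

/-!
Every `v ∈ M^∨` has a positive multiple `N • v = ∑ cᵢ • uᵢ`. This is proved by induction on the
support of `v` on a finite generating set of `M`: if the face of morphisms vanishing wherever `v`
does is not a ray, it contains some `w` not proportional to `v`; clipping `v` against `w` and `w`
against `v` writes a positive multiple of `v` as a combination of two morphisms of smaller support.

In such a decomposition `cᵢ ≤ N v(n)` whenever `uᵢ(n) > 0`, and `uᵢ^gp(m) = 1` otherwise. Hence
`v^gp(m) ≥ -v(n) ∑ uᵢ(m₂)`, and once `v(n)` and `v^gp(m)` are fixed all `cᵢ / N` are bounded,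
so `v` is bounded on the generators of `M` and only finitely many `v` remain.
-/

open AddSubmonoid Finset

section Dual

variable {M : Type*} [AddCommMonoid M]

def supportOn (S : Finset M) (v : M →+ ℕ) : Finset M := {g ∈ S | v g ≠ 0}

lemma AddMonoidHom.eq_zero_of_nsmul_eq_zero {k : ℕ} {f : M →+ ℕ} (h : k • f = 0) (hk : k ≠ 0) :
    f = 0 := by
  ext x
  simpa [hk] using DFunLike.congr_fun h x

lemma AddMonoidHom.exists_eq_add_of_le_on {S : Set M} (hS : closure S = ⊤) {v w : M →+ ℕ}
    (h : ∀ g ∈ S, w g ≤ v g) : ∃ z : M →+ ℕ, v = w + z := by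
  have hle : ∀ x, w x ≤ v x := fun x =>
    dense_induction (motive := fun x => w x ≤ v x) S hS h (by simp)
      (fun x y hx hy => by simp only [map_add]; omega) x
  refine ⟨{ toFun := fun x => v x - w x
            map_zero' := by simp
            map_add' := fun x y => by have := hle x; have := hle y; simp only [map_add]; omega },
    AddMonoidHom.ext fun x => ?_⟩
  have := hle x
  simp only [AddMonoidHom.add_apply, AddMonoidHom.coe_mk, ZeroHom.coe_mk]
  omega

/-- Subtracting from `v` the largest multiple of `w` that stays in `M^∨` (up to clearing
denominators): the minimum of `v g / w g` over the generators is attained at some `g`. -/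
lemma AddMonoidHom.exists_nsmul_eq_nsmul_add {S : Finset M} (hS : closure (S : Set M) = ⊤)
    (v : M →+ ℕ) {w : M →+ ℕ} (hw : w ≠ 0) :
    ∃ g ∈ S, w g ≠ 0 ∧ ∃ z : M →+ ℕ, w g • v = v g • w + z ∧ z g = 0 := by
  have hsupp : (supportOn S w).Nonempty := by
    by_contra h
    refine hw (AddMonoidHom.eq_of_eqOn_denseM hS fun g hg => ?_)
    by_contra hg'
    exact h ⟨g, mem_filter.2 ⟨hg, hg'⟩⟩
  obtain ⟨g, hg, hmin⟩ := exists_min_image _ (fun g => (v g : ℚ) / w g) hsupp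
  obtain ⟨hgS, hwg⟩ := mem_filter.1 hg
  refine ⟨g, hgS, hwg, ?_⟩
  obtain ⟨z, hz⟩ := AddMonoidHom.exists_eq_add_of_le_on (v := w g • v) (w := v g • w) hS
    fun g' hg' => by
      by_cases hwg' : w g' = 0
      · simp [hwg']
      have := hmin g' (mem_filter.2 ⟨hg', hwg'⟩)
      rw [div_le_div_iff₀ (by positivity) (by positivity)] at this
      simp only [AddMonoidHom.nsmul_apply, smul_eq_mul]
      exact_mod_cast (by linarith : (v g : ℚ) * w g' ≤ w g * v g')
  refine ⟨z, hz, ?_⟩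
  have := DFunLike.congr_fun hz g
  simp only [AddMonoidHom.add_apply, AddMonoidHom.nsmul_apply, smul_eq_mul] at this
  rw [mul_comm] at this
  omega

def vanishingFace (v : M →+ ℕ) : AddSubmonoid (M →+ ℕ) where
  carrier := {w | ∀ x, v x = 0 → w x = 0}
  zero_mem' := fun _ _ => rfl
  add_mem' := fun ha hb x hx => by simp [ha x hx, hb x hx]

lemma mem_vanishingFace_self (v : M →+ ℕ) : v ∈ vanishingFace v := fun _ h => h

lemma isFace_vanishingFace (v : M →+ ℕ) : IsFace (vanishingFace v) := fun _ _ h =>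
  ⟨fun z hz => (Nat.add_eq_zero_iff.1 (h z hz)).1, fun z hz => (Nat.add_eq_zero_iff.1 (h z hz)).2⟩

lemma card_supportOn_lt {S : Finset M} {v z : M →+ ℕ} (hz : z ∈ vanishingFace v) {g : M}
    (hg : g ∈ S) (hvg : v g ≠ 0) (hzg : z g = 0) : #(supportOn S z) < #(supportOn S v) := by
  refine card_lt_card ((ssubset_iff_of_subset fun x hx => ?_).2 ⟨g, ?_, ?_⟩)
  · obtain ⟨hxS, hzx⟩ := mem_filter.1 hx
    exact mem_filter.2 ⟨hxS, fun h => hzx (hz x h)⟩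
  · exact mem_filter.2 ⟨hg, hvg⟩
  · simp [supportOn, hzg]

def NotProportional (x y : M →+ ℕ) : Prop := ∀ a b : ℕ, a • x = b • y → a = 0 ∧ b = 0

lemma NotProportional.ne_zero_left {x y : M →+ ℕ} (h : NotProportional x y) : x ≠ 0 :=
  fun hx => one_ne_zero (h 1 0 (by simp [hx])).1

lemma NotProportional.ne_zero_right {x y : M →+ ℕ} (h : NotProportional x y) : y ≠ 0 :=
  fun hy => one_ne_zero (h 0 1 (by simp [hy])).2

lemma NotProportional.or {x y : M →+ ℕ} (hxy : NotProportional x y) {v : M →+ ℕ} (hv : v ≠ 0) :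
    NotProportional x v ∨ NotProportional y v := by
  by_cases hxv : NotProportional x v
  · exact Or.inl hxv
  refine Or.inr fun a' b' h' => ?_
  simp only [NotProportional, not_forall] at hxv
  obtain ⟨a, b, hab, hne⟩ := hxv
  have ha : a ≠ 0 := by
    rintro rfl
    refine hne ⟨rfl, by_contra fun hb => hv ?_⟩
    exact AddMonoidHom.eq_zero_of_nsmul_eq_zero (by rw [← hab, zero_smul]) hb
  have hb : b ≠ 0 := fun hb =>
    hxy.ne_zero_left (AddMonoidHom.eq_zero_of_nsmul_eq_zero (by rw [hab, hb, zero_smul]) ha)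
  have := hxy (b' * a) (b * a') (by rw [mul_smul, mul_smul, hab, h', smul_comm])
  simp_all

lemma exists_notProportional_of_not_isOneDimFace {F : AddSubmonoid (M →+ ℕ)} (hF : IsFace F)
    {v : M →+ ℕ} (hvF : v ∈ F) (hv : v ≠ 0) (h : ¬IsOneDimFace F) :
    ∃ w ∈ F, NotProportional w v := by
  have hne : F ≠ ⊥ := fun hbot => hv (AddSubmonoid.mem_bot.1 (hbot ▸ hvF))
  simp only [IsOneDimFace, hF, hne, ne_eq, not_false_eq_true, true_and, not_forall] at h
  obtain ⟨x, hx, y, hy, hxy⟩ := h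
  have hxy : NotProportional x y := fun a b hab => by
    by_contra hab'
    exact hxy ⟨a, b, hab', hab⟩
  rcases hxy.or hv with hxv | hyv
  exacts [⟨x, hx, hxv⟩, ⟨y, hy, hyv⟩]

/-- With `q • v = p • w + z` and `q' • w = p' • v + z'` from two clippings, `v` lies strictly
between `z` and `z'`: `(q q' - p p') • v = p • z' + q' • z`, and `q q' > p p'` because otherwise
`z = 0` would make `w` proportional to `v`. -/
lemma exists_nsmul_eq_add_of_notProportional {S : Finset M} (hS : closure (S : Set M) = ⊤)
    {v w : M →+ ℕ} (hw : w ∈ vanishingFace v) (hwv : NotProportional w v) :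
    ∃ D : ℕ, 0 < D ∧ ∃ (a b : ℕ) (z z' : M →+ ℕ), D • v = a • z + b • z' ∧
      #(supportOn S z) < #(supportOn S v) ∧ #(supportOn S z') < #(supportOn S v) := by
  obtain ⟨g, hgS, hwg, z, hz, hzg⟩ :=
    AddMonoidHom.exists_nsmul_eq_nsmul_add hS v hwv.ne_zero_left
  obtain ⟨g', hg'S, hvg', z', hz', hz'g'⟩ :=
    AddMonoidHom.exists_nsmul_eq_nsmul_add hS w hwv.ne_zero_right
  have hz_apply := DFunLike.congr_fun hz
  have hz'_apply := DFunLike.congr_fun hz'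
  simp only [AddMonoidHom.add_apply, AddMonoidHom.nsmul_apply, smul_eq_mul] at hz_apply hz'_apply
  have hzF : z ∈ vanishingFace v := fun x hx => by
    have := hz_apply x
    rw [hx, hw x hx] at this
    omega
  have hz'F : z' ∈ vanishingFace v := fun x hx => by
    have := hz'_apply x
    rw [hx, hw x hx] at this
    omega
  have key : ∀ x, w g * v g' * v x = v g * w g' * v x + (v g * z' x + v g' * z x) := by
    intro x
    zify at hz_apply hz'_apply ⊢
    linear_combination (v g' : ℤ) * hz_apply x + (v g : ℤ) * hz'_apply x
  have hlt : v g * w g' < w g * v g' := by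
    by_contra! hle
    have hz0 : z = 0 := AddMonoidHom.ext fun x => by
      have := key x
      have : w g * v g' * v x ≤ v g * w g' * v x := Nat.mul_le_mul_right _ hle
      have : v g' * z x = 0 := by omega
      simpa [hvg'] using this
    have := hwv (v g) (w g) (by rw [hz, hz0, add_zero])
    exact hwg this.2
  obtain ⟨D, hD⟩ := Nat.exists_eq_add_of_lt hlt
  refine ⟨D + 1, D.succ_pos, v g, v g', z', z, AddMonoidHom.ext fun x => ?_,
    card_supportOn_lt hz'F hg'S hvg' hz'g', card_supportOn_lt hzF hgS (fun h => hwg (hw g h)) hzg⟩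
  have := key x
  rw [hD] at this
  simp only [AddMonoidHom.add_apply, AddMonoidHom.nsmul_apply, smul_eq_mul]
  nlinarith

theorem exists_nsmul_mem_closure_range {S : Finset M} (hS : closure (S : Set M) = ⊤)
    {ι : Type*} {u : ι → M →+ ℕ}
    (hfaces : ∀ F : AddSubmonoid (M →+ ℕ), IsOneDimFace F → ∃ i, F = multiples (u i))
    (v : M →+ ℕ) : ∃ N : ℕ, 0 < N ∧ N • v ∈ closure (Set.range u) := by
  induction hk : #(supportOn S v) using Nat.strong_induction_on generalizing v with
  | _ k IH =>
  by_cases hv : v = 0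
  · exact ⟨1, one_pos, by simp [hv, zero_mem]⟩
  by_cases hF : IsOneDimFace (vanishingFace v)
  · obtain ⟨i, hi⟩ := hfaces _ hF
    obtain ⟨c, hc⟩ := (mem_multiples_iff _ _).1 (hi ▸ mem_vanishingFace_self v)
    refine ⟨1, one_pos, ?_⟩
    rw [one_smul, ← hc]
    exact nsmul_mem (subset_closure (Set.mem_range_self i)) c
  obtain ⟨w, hw, hwv⟩ := exists_notProportional_of_not_isOneDimFace (isFace_vanishingFace v)
    (mem_vanishingFace_self v) hv hF
  obtain ⟨D, hD, a, b, z, z', hDv, hz, hz'⟩ := exists_nsmul_eq_add_of_notProportional hS hw hwv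
  obtain ⟨N, hN, hNz⟩ := IH _ (hk ▸ hz) z rfl
  obtain ⟨N', hN', hNz'⟩ := IH _ (hk ▸ hz') z' rfl
  refine ⟨N * N' * D, by positivity, ?_⟩
  have : (N * N' * D) • v = (a * N') • (N • z) + (b * N) • (N' • z') := by
    rw [mul_smul, hDv, smul_add, smul_smul, smul_smul, smul_smul, smul_smul]
    congr 2 <;> ring
  rw [this]
  exact add_mem (nsmul_mem hNz _) (nsmul_mem hNz' _)

end Dual

section Bounds

variable {M : Type*} [AddCommMonoid M] {ι : Type*} [Fintype ι] {u : ι → M →+ ℕ} {m₁ m₂ n : M}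

lemma exists_natCast_mul_eq_sum {v : M →+ ℕ}
    (hv : ∃ N : ℕ, 0 < N ∧ N • v ∈ closure (Set.range u)) :
    ∃ N : ℕ, 0 < N ∧ ∃ c : ι → ℕ, ∀ x, (N : ℤ) * v x = ∑ i, (c i : ℤ) * u i x := by
  obtain ⟨N, hN, hNv⟩ := hv
  obtain ⟨c, hc⟩ := AddSubmonoid.mem_closure_range_iff_of_fintype.1 hNv
  refine ⟨N, hN, c, fun x => ?_⟩
  have := DFunLike.congr_fun hc x
  simp only [AddMonoidHom.nsmul_apply, AddMonoidHom.finsetSum_apply, smul_eq_mul] at this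
  exact_mod_cast this

/-- In `N v = ∑ cᵢ uᵢ`, every `cᵢ` is at most `N v(n)` unless `uᵢ(n) = 0`, and then
`uᵢ^gp(m) = 1`; so each term `cᵢ uᵢ^gp(m)` is bounded below by `-N v(n) uᵢ(m₂)`. -/
lemma coeff_bounds (hm : ∀ j, u j n = 0 → (u j m₁ : ℤ) - u j m₂ = 1) {v : M →+ ℕ} {N : ℕ}
    {c : ι → ℕ} (hc : ∀ x, (N : ℤ) * v x = ∑ i, (c i : ℤ) * u i x) (i : ι) :
    0 ≤ c i * ((u i m₁ : ℤ) - u i m₂) + N * v n * u i m₂ ∧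
      (c i : ℤ) ≤ N * v n + (c i * ((u i m₁ : ℤ) - u i m₂) + N * v n * u i m₂) := by
  have hcn : (c i : ℤ) * u i n ≤ N * v n := by
    rw [hc n]
    exact single_le_sum (f := fun j => (c j : ℤ) * u j n) (fun j _ => by positivity) (mem_univ i)
  have : (0 : ℤ) ≤ N * v n := by positivity
  have : (0 : ℤ) ≤ N * v n * u i m₂ := by positivity
  by_cases hi : u i n = 0
  · rw [hm i hi]
    constructor <;> linarith
  · have hi : (1 : ℤ) ≤ u i n := by exact_mod_cast Nat.one_le_iff_ne_zero.2 hi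
    have : (c i : ℤ) ≤ N * v n := (le_mul_of_one_le_right (by positivity) hi).trans hcn
    constructor <;> nlinarith [Int.natCast_nonneg (u i m₁), Int.natCast_nonneg (u i m₂)]

lemma sum_coeff_terms_eq {v : M →+ ℕ} {N : ℕ} {c : ι → ℕ}
    (hc : ∀ x, (N : ℤ) * v x = ∑ i, (c i : ℤ) * u i x) :
    ∑ i, (c i * ((u i m₁ : ℤ) - u i m₂) + N * v n * u i m₂) =
      N * ((v m₁ : ℤ) - v m₂ + v n * ∑ i, (u i m₂ : ℤ)) := by
  simp only [sum_add_distrib, mul_sub, sum_sub_distrib, ← hc, ← mul_sum]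
  ring

lemma neg_mul_sum_le_apply_sub_apply (hm : ∀ j, u j n = 0 → (u j m₁ : ℤ) - u j m₂ = 1)
    {v : M →+ ℕ} (hv : ∃ N : ℕ, 0 < N ∧ N • v ∈ closure (Set.range u)) :
    -(v n * ∑ i, (u i m₂ : ℤ)) ≤ (v m₁ : ℤ) - v m₂ := by
  obtain ⟨N, hN, c, hc⟩ := exists_natCast_mul_eq_sum hv
  have hnonneg : (0 : ℤ) ≤ N * ((v m₁ : ℤ) - v m₂ + v n * ∑ i, (u i m₂ : ℤ)) :=
    sum_coeff_terms_eq hc ▸ sum_nonneg fun i _ => (coeff_bounds hm hc i).1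
  have := (mul_nonneg_iff_of_pos_left (by exact_mod_cast hN)).1 hnonneg
  linarith

lemma apply_le_mul_sum (hm : ∀ j, u j n = 0 → (u j m₁ : ℤ) - u j m₂ = 1)
    {v : M →+ ℕ} (hv : ∃ N : ℕ, 0 < N ∧ N • v ∈ closure (Set.range u)) (g : M) :
    (v g : ℤ) ≤ (v n + ((v m₁ : ℤ) - v m₂) + v n * ∑ i, (u i m₂ : ℤ)) * ∑ i, (u i g : ℤ) := by
  obtain ⟨N, hN, c, hc⟩ := exists_natCast_mul_eq_sum hv
  set K : ℤ := v n + ((v m₁ : ℤ) - v m₂) + v n * ∑ i, (u i m₂ : ℤ)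
  have hcK : ∀ i, (c i : ℤ) ≤ N * K := fun i => by
    have hterm := single_le_sum (fun j _ => (coeff_bounds hm hc j).1) (mem_univ i)
    rw [sum_coeff_terms_eq hc] at hterm
    linarith [(coeff_bounds hm hc i).2]
  have : (N : ℤ) * v g ≤ N * (K * ∑ i, (u i g : ℤ)) :=
    calc (N : ℤ) * v g = ∑ i, (c i : ℤ) * u i g := hc g
      _ ≤ ∑ i, (N * K) * u i g := sum_le_sum fun i _ => by gcongr; exact hcK i
      _ = N * (K * ∑ i, (u i g : ℤ)) := by rw [← mul_assoc, mul_sum]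
  exact le_of_mul_le_mul_left this (by exact_mod_cast hN)

end Bounds

lemma AddMonoidHom.finite_setOf_forall_apply_le {M : Type*} [AddCommMonoid M] [AddMonoid.FG M]
    (B : M → ℕ) : {v : M →+ ℕ | ∀ x, v x ≤ B x}.Finite := by
  obtain ⟨S, hS⟩ := AddMonoid.FG.fg_top (M := M)
  refine Set.Finite.of_finite_image (f := fun v (g : S) => v g) ?_ fun v _ w _ hvw =>
    AddMonoidHom.eq_of_eqOn_denseM hS fun g hg => congr_fun hvw ⟨g, hg⟩
  refine (Set.Finite.pi (t := fun g : S => Set.Iic (B g)) fun _ => Set.finite_Iic _).subset ?_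
  rintro _ ⟨v, hv, rfl⟩ g -
  exact hv g

section Series

variable {M : Type*} [AddCommMonoid M] {m₁ m₂ n : M}

lemma exists_isLocalDualSeries (hfin : ∀ b a, (localLevelSet m₁ m₂ n b a).Finite)
    (hbdd : ∀ b, BddBelow {a | (localLevelSet m₁ m₂ n b a).Nonempty}) :
    ∃ G : PowerSeries RL, IsLocalDualSeries m₁ m₂ n G := by
  refine ⟨PowerSeries.mk fun b => HahnSeries.ofSuppBddBelow
    (fun a => (Nat.card (localLevelSet m₁ m₂ n b a) : ℤ)) ((hbdd b).mono fun a ha => ?_),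
    fun b a => ⟨hfin b a, by simp⟩⟩
  have : Nat.card (localLevelSet m₁ m₂ n b a) ≠ 0 := by simpa using ha
  exact Set.nonempty_coe_sort.1 (Nat.card_ne_zero.1 this).1

lemma IsLocalDualSeries.constantCoeff_eq_zero {G : PowerSeries RL}
    (hG : IsLocalDualSeries m₁ m₂ n G) (h0 : ∀ a, localLevelSet m₁ m₂ n 0 a = ∅) :
    PowerSeries.constantCoeff G = 0 := by
  ext a
  rw [← PowerSeries.coeff_zero_eq_constantCoeff_apply, (hG 0 a).2, h0]
  simp

end Series

theorem series_welldefined_general (M : Type*) [AddCancelCommMonoid M] [AddMonoid.FG M]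
    (hsharp : ∀ x : M, IsAddUnit x → x = 0)
    (m₁ m₂ n : M) (hn : n ≠ 0)
    (r : ℕ) (u : Fin r → (M →+ ℕ))
    (hfaces : ∀ F : AddSubmonoid (M →+ ℕ),
      IsOneDimFace F ↔ ∃ i : Fin r, F = AddSubmonoid.multiples (u i))
    (hm : ∀ j : Fin r, u j n = 0 → (u j m₁ : ℤ) - (u j m₂ : ℤ) = 1) :
    (∀ v : M →+ ℕ, IsLocalAddHom v → 1 ≤ v n) ∧
    (∀ k : ℕ, 1 ≤ k →
      BddBelow {a : ℤ | ∃ v : M →+ ℕ, IsLocalAddHom v ∧ v n = k ∧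
        (v m₁ : ℤ) - (v m₂ : ℤ) = a}) ∧
    (∀ k : ℕ, 1 ≤ k → ∀ j : ℤ, (localLevelSet m₁ m₂ n k j).Finite) ∧
    (∃ G : PowerSeries RL, PowerSeries.constantCoeff G = 0 ∧
      IsLocalDualSeries m₁ m₂ n G) := by
  obtain ⟨S, hS⟩ := AddMonoid.FG.fg_top (M := M)
  have hcone (v : M →+ ℕ) := exists_nsmul_mem_closure_range hS (fun F hF => (hfaces F).1 hF) v
  set C : ℤ := ∑ i, (u i m₂ : ℤ)
  have hpos (v : M →+ ℕ) (hv : IsLocalAddHom v) : 1 ≤ v n :=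
    Nat.one_le_iff_ne_zero.2 (hv n fun h => hn (hsharp n h))
  have hlow (b : ℕ) : -(b * C) ∈ lowerBounds {a | (localLevelSet m₁ m₂ n b a).Nonempty} := by
    rintro a ⟨v, -, rfl, rfl⟩
    exact neg_mul_sum_le_apply_sub_apply hm (hcone v)
  have hfin (b : ℕ) (a : ℤ) : (localLevelSet m₁ m₂ n b a).Finite :=
    (AddMonoidHom.finite_setOf_forall_apply_le
      fun x => ((b + a + b * C) * ∑ i, (u i x : ℤ)).toNat).subset fun v ⟨_, hvb, hva⟩ x => by
        have := apply_le_mul_sum hm (hcone v) x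
        rw [hvb, hva] at this
        simpa using Int.toNat_le_toNat this
  obtain ⟨G, hG⟩ := exists_isLocalDualSeries hfin fun b => ⟨_, hlow b⟩
  refine ⟨hpos, fun k _ => ⟨_, hlow k⟩, fun k _ j => hfin k j, G,
    hG.constantCoeff_eq_zero fun a => ?_, hG⟩
  exact Set.eq_empty_of_forall_notMem fun v ⟨hv, hv0, _⟩ => by linarith [hpos v hv]

/-- Let `M` be a sharp, fine and saturated monoid, let `m = m₁ - m₂ ∈ M^gp` and let
`n ∈ M ∖ {0}`.  Let `u 1, …, u r` be the generators of the one-dimensional faces of the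
dual monoid `M^∨ = Hom(M, ℕ)` and assume `u j ^gp(m) = 1` for every `j` with `u j (n) = 0`.
Then: (1) `u(n) ≥ 1` for every local `u`; (2) for every `k ≥ 1` the function
`u ↦ u^gp(m)` is bounded below on `{u local : u(n) = k}`; (3) for every `k ≥ 1` and
`j ∈ ℤ` the set `{u local : u(n) = k, u^gp(m) = j}` is finite.  Consequently the series
`Σ_{u ∈ M^{∨,loc}} L^{-u^gp(m)} T^{u(n)}` is a well-defined element of `ℤ((L⁻¹))[[T]]`
with zero constant term in `T`. -/
theorem series_welldefined (M : Type*) [AddCancelCommMonoid M] [AddMonoid.FG M]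
    (hsharp : ∀ x : M, IsAddUnit x → x = 0) (hsat : IsSaturatedAddMonoid M)
    (m₁ m₂ n : M) (hn : n ≠ 0)
    (r : ℕ) (u : Fin r → (M →+ ℕ)) (hinj : Function.Injective u)
    (hfaces : ∀ F : AddSubmonoid (M →+ ℕ),
      IsOneDimFace F ↔ ∃ i : Fin r, F = AddSubmonoid.multiples (u i))
    (hm : ∀ j : Fin r, u j n = 0 → (u j m₁ : ℤ) - (u j m₂ : ℤ) = 1) :
    (∀ v : M →+ ℕ, IsLocalAddHom v → 1 ≤ v n) ∧
    (∀ k : ℕ, 1 ≤ k →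
      BddBelow {a : ℤ | ∃ v : M →+ ℕ, IsLocalAddHom v ∧ v n = k ∧
        (v m₁ : ℤ) - (v m₂ : ℤ) = a}) ∧
    (∀ k : ℕ, 1 ≤ k → ∀ j : ℤ, (localLevelSet m₁ m₂ n k j).Finite) ∧
    (∃ G : PowerSeries RL, PowerSeries.constantCoeff G = 0 ∧
      IsLocalDualSeries m₁ m₂ n G) :=
  series_welldefined_general M hsharp m₁ m₂ n hn r u hfaces hm
end

section
/- Let M be a sharp, fine and saturated monoid of dimension d, let m ∈ M^gp and let n ∈ M ∖ {0}. Suppose the dual monoid M^∨ = Hom(M, ℕ) is simplicial, i.e. it has exactly d one-dimensional faces, whose generators u_1, …, u_d are linearly independent in Hom(M^gp, ℤ) ⊗ ℚ and rationally generate the cone of M^∨ (every element of M^∨ is a non-negative rational linear combination of u_1, …, u_d). Assume u_j^gp(m) = 1 for every j with u_j(n) = 0. Let P = {λ_1 u_1 + ⋯ + λ_d u_d ∈ M^{∨,loc} : λ_i ∈ ℚ, 0 < λ_i ≤ 1} be the fundamental parallelepiped. Then P is a finite set, each element 1 − L^{−u_i^gp(m)} T^{u_i(n)} (1 ≤ i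 ≤ d) is invertible in ℤ((L^{−1}))[[T]], and Σ_{u ∈ M^{∨,loc}} L^{−u^gp(m)} T^{u(n)} = (Σ_{u ∈ P} L^{−u^gp(m)} T^{u(n)}) · Π_{i=1}^{d} (1 − L^{−u_i^gp(m)} T^{u_i(n)})^{−1} in ℤ((L^{−1}))[[T]]. -/
/-- The fundamental parallelepiped `P = {λ₁ u₁ + ⋯ + λ_d u_d ∈ M^{∨,loc} : λ_i ∈ ℚ ∩ (0,1]}`
attached to the generators `u i` of the one-dimensional faces of a simplicial dual monoid. -/
def fundamentalPara {M : Type*} [AddCommMonoid M] {d : ℕ} (u : Fin d → (M →+ ℕ)) :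
    Set (M →+ ℕ) :=
  {v | IsLocalAddHom v ∧ ∃ lam : Fin d → ℚ, (∀ i, 0 < lam i ∧ lam i ≤ 1) ∧
    ∀ x : M, (v x : ℚ) = ∑ i, lam i * (u i x : ℚ)}

/-!
Every local `v ∈ M^∨` has positive rational coordinates with respect to `u`; removing integer
parts so that the remainders lie in `(0, 1]` writes `v` uniquely as `p + Σ kᵢ • uᵢ` with `p` in
the fundamental parallelepiped `P` and `k ∈ ℕ^d`. Hence the series over `M^{∨,loc}` is
`Σ_{p ∈ P} L^{-p(m)} T^{p(n)}` times the series `Q` counting `k ∈ ℕ^d` with weight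
`Σ kᵢ (uᵢ(n), uᵢ(m))`. Splitting `ℕ^d` according to whether `k₀ = 0` gives
`Q · (1 - L^{-u₀(m)} T^{u₀(n)}) = Q'`, the series of the lattice of one dimension less, so by
induction `Q · Π (1 - L^{-uᵢ(m)} T^{uᵢ(n)}) = 1`. The hypothesis on `m` makes every weight
positive for a grading `a + D b`, which keeps all the counts finite.
-/

theorem LTmonomial_eq_C_mul_X_pow (a : ℤ) (b : ℕ) :
    LTmonomial a b = PowerSeries.C (HahnSeries.single a 1) * PowerSeries.X ^ b := by
  ext k
  rw [LTmonomial, PowerSeries.coeff_monomial, PowerSeries.coeff_C_mul_X_pow]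

theorem LTmonomial_zero_zero : LTmonomial 0 0 = 1 := by
  simp [LTmonomial, PowerSeries.monomial_zero_eq_C_apply]

theorem coeff_LTmonomial (a₀ : ℤ) (b₀ b : ℕ) (a : ℤ) :
    ((PowerSeries.coeff b) (LTmonomial a₀ b₀)).coeff a = if b₀ = b ∧ a₀ = a then 1 else 0 := by
  by_cases h : b₀ = b
  · subst h
    simp [LTmonomial, HahnSeries.coeff_single, eq_comm]
  · simp [LTmonomial, PowerSeries.coeff_monomial, Ne.symm h, h]

theorem coeff_LTmonomial_mul (a₀ : ℤ) (b₀ : ℕ) (F : PowerSeries RL) (b : ℕ) (a : ℤ) :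
    ((PowerSeries.coeff b) (LTmonomial a₀ b₀ * F)).coeff a =
      if b₀ ≤ b then ((PowerSeries.coeff (b - b₀)) F).coeff (a - a₀) else 0 := by
  rw [LTmonomial_eq_C_mul_X_pow, mul_comm, ← mul_assoc, PowerSeries.coeff_mul_X_pow',
    mul_comm]
  split_ifs
  · rw [PowerSeries.coeff_C_mul, mul_comm, ← sub_add_cancel a a₀,
      HahnSeries.coeff_mul_single_add, mul_one, add_sub_cancel_right]
  · rfl

section CountingSeries

variable {α β : Type*}

def weightFiber (s : Set α) (deg : α → ℕ) (ex : α → ℤ) (b : ℕ) (a : ℤ) : Set α :=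
  {x ∈ s | deg x = b ∧ ex x = a}

/-- `G = Σ_{x ∈ s} L^{-ex x} T^{deg x}`. -/
def IsCountingSeries (s : Set α) (deg : α → ℕ) (ex : α → ℤ) (G : PowerSeries RL) : Prop :=
  ∀ b a, (weightFiber s deg ex b a).Finite ∧
    ((PowerSeries.coeff b) G).coeff a = Nat.card (weightFiber s deg ex b a)

theorem weightFiber_subset (s : Set α) (deg : α → ℕ) (ex : α → ℤ) (b : ℕ) (a : ℤ) :
    weightFiber s deg ex b a ⊆ s :=
  Set.sep_subset _ _

theorem isLocalDualSeries_iff {M : Type*} [AddCommMonoid M] (m₁ m₂ n : M) (G : PowerSeries RL) :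
    IsLocalDualSeries m₁ m₂ n G ↔ IsCountingSeries {v : M →+ ℕ | IsLocalAddHom v}
      (fun v => v n) (fun v => (v m₁ : ℤ) - v m₂) G :=
  Iff.rfl

variable {s t : Set α} {deg : α → ℕ} {ex : α → ℤ} {F G : PowerSeries RL}

theorem IsCountingSeries.unique (hF : IsCountingSeries s deg ex F)
    (hG : IsCountingSeries s deg ex G) : F = G := by
  ext b : 1
  ext a
  rw [(hF b a).2, (hG b a).2]

theorem exists_isCountingSeries (hfin : ∀ b a, (weightFiber s deg ex b a).Finite)
    (hbdd : ∀ b, ∃ a₀, ∀ a, (weightFiber s deg ex b a).Nonempty → a₀ ≤ a) :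
    ∃ G, IsCountingSeries s deg ex G := by
  choose a₀ ha₀ using hbdd
  refine ⟨PowerSeries.mk fun b => HahnSeries.ofSuppBddBelow
    (fun a => (Nat.card (weightFiber s deg ex b a) : ℤ)) ⟨a₀ b, fun a ha => ha₀ b a ?_⟩,
    fun b a => ⟨hfin b a, by simp⟩⟩
  exact Set.nonempty_coe_sort.mp (Nat.card_ne_zero.mp (Int.natCast_ne_zero.mp ha)).1

theorem isCountingSeries_empty : IsCountingSeries (∅ : Set α) deg ex 0 := by
  intro b a
  simp [weightFiber]

theorem isCountingSeries_singleton (x : α) :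
    IsCountingSeries {x} deg ex (LTmonomial (ex x) (deg x)) := by
  intro b a
  by_cases h : deg x = b ∧ ex x = a
  · have hfib : weightFiber {x} deg ex b a = {x} := by
      ext y
      simp +contextual [weightFiber, h]
    rw [hfib, coeff_LTmonomial, if_pos h]
    simp
  · have hfib : weightFiber {x} deg ex b a = ∅ := by
      ext y
      simp +contextual [weightFiber, h]
    rw [hfib, coeff_LTmonomial, if_neg h]
    simp

theorem IsCountingSeries.image {deg' : β → ℕ} {ex' : β → ℤ} {f : α → β}
    (hF : IsCountingSeries s deg ex F) (hf : s.InjOn f) (hdeg : ∀ x, deg' (f x) = deg x)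
    (hex : ∀ x, ex' (f x) = ex x) : IsCountingSeries (f '' s) deg' ex' F := by
  intro b a
  have hfib : weightFiber (f '' s) deg' ex' b a = f '' weightFiber s deg ex b a := by
    ext y
    simp only [weightFiber, Set.mem_image, Set.mem_sep_iff]
    constructor
    · rintro ⟨⟨x, hx, rfl⟩, hb, ha⟩
      exact ⟨x, ⟨hx, (hdeg x).symm.trans hb, (hex x).symm.trans ha⟩, rfl⟩
    · rintro ⟨x, ⟨hx, hb, ha⟩, rfl⟩
      exact ⟨⟨x, hx, rfl⟩, (hdeg x).trans hb, (hex x).trans ha⟩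
  rw [hfib, Nat.card_image_of_injOn (hf.mono (weightFiber_subset ..))]
  exact ⟨(hF b a).1.image f, (hF b a).2⟩

theorem IsCountingSeries.union (hF : IsCountingSeries s deg ex F)
    (hG : IsCountingSeries t deg ex G) (hst : Disjoint s t) :
    IsCountingSeries (s ∪ t) deg ex (F + G) := by
  intro b a
  have hfib : weightFiber (s ∪ t) deg ex b a =
      weightFiber s deg ex b a ∪ weightFiber t deg ex b a := Set.sep_union
  obtain ⟨hFfin, hFcoeff⟩ := hF b a
  obtain ⟨hGfin, hGcoeff⟩ := hG b a
  refine ⟨hfib ▸ hFfin.union hGfin, ?_⟩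
  rw [hfib, Nat.card_coe_set_eq, Set.ncard_union_eq
    (hst.mono (weightFiber_subset ..) (weightFiber_subset ..)) hFfin hGfin, map_add,
    HahnSeries.coeff_add, hFcoeff, hGcoeff, Nat.card_coe_set_eq, Nat.card_coe_set_eq, Nat.cast_add]

theorem IsCountingSeries.biUnion {ι : Type*} {I : Finset ι} {s : ι → Set α}
    {F : ι → PowerSeries RL} (hF : ∀ i ∈ I, IsCountingSeries (s i) deg ex (F i))
    (hdisj : (I : Set ι).PairwiseDisjoint s) :
    IsCountingSeries (⋃ i ∈ I, s i) deg ex (∑ i ∈ I, F i) := by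
  classical
  induction I using Finset.induction_on with
  | empty => simpa using isCountingSeries_empty
  | insert j I hj ih =>
    rw [Finset.set_biUnion_insert, Finset.sum_insert hj]
    rw [Finset.coe_insert, Set.pairwiseDisjoint_insert_of_notMem (by simpa using hj)] at hdisj
    refine (hF j (I.mem_insert_self j)).union
      (ih (fun i hi => hF i (Finset.mem_insert_of_mem hi)) hdisj.1) ?_
    exact Set.disjoint_iUnion₂_right.mpr fun i hi => hdisj.2 i hi

theorem IsCountingSeries.monomial_mul (hF : IsCountingSeries s deg ex F) (b₀ : ℕ) (a₀ : ℤ) :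
    IsCountingSeries s (fun x => b₀ + deg x) (fun x => a₀ + ex x) (LTmonomial a₀ b₀ * F) := by
  intro b a
  rw [coeff_LTmonomial_mul]
  split_ifs with h
  · have hfib : weightFiber s (fun x => b₀ + deg x) (fun x => a₀ + ex x) b a =
        weightFiber s deg ex (b - b₀) (a - a₀) := by
      ext x
      simp only [weightFiber, Set.mem_sep_iff]
      exact and_congr_right fun _ => by omega
    rw [hfib]
    exact hF _ _
  · have hfib : weightFiber s (fun x => b₀ + deg x) (fun x => a₀ + ex x) b a = ∅ := by
      ext x
      simp only [weightFiber, Set.mem_sep_iff, Set.mem_empty_iff_false, iff_false]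
      rintro ⟨-, hb, -⟩
      omega
    simp [hfib]

end CountingSeries

section Lattice

variable {d : ℕ}

theorem exists_one_le_add_mul {b : Fin d → ℕ} {c : Fin d → ℤ} (hc : ∀ i, b i = 0 → 0 < c i) :
    ∃ D : ℤ, ∀ i, 1 ≤ c i + b i * D := by
  refine ⟨∑ j, |c j| + 1, fun i => ?_⟩
  have hci : |c i| ≤ ∑ j, |c j| :=
    Finset.single_le_sum (fun j _ => abs_nonneg (c j)) (Finset.mem_univ i)
  rcases Nat.eq_zero_or_pos (b i) with hb | hb
  · have := hc i hb
    simp only [hb, Nat.cast_zero, zero_mul, add_zero]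
    omega
  · have : (1 : ℤ) ≤ b i := by exact_mod_cast hb
    nlinarith [neg_abs_le (c i), abs_nonneg (c i)]

theorem sum_le_of_one_le_add_mul {b : Fin d → ℕ} {c : Fin d → ℤ} {D : ℤ}
    (hD : ∀ i, 1 ≤ c i + b i * D) (k : Fin d → ℕ) :
    ∑ i, (k i : ℤ) ≤ ∑ i, (k i : ℤ) * c i + D * ((∑ i, k i * b i : ℕ) : ℤ) := by
  calc ∑ i, (k i : ℤ) ≤ ∑ i, (k i : ℤ) * (c i + b i * D) :=
        Finset.sum_le_sum fun i _ => le_mul_of_one_le_right (by positivity) (hD i)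
    _ = _ := by
        push_cast
        simp only [mul_add, Finset.sum_add_distrib, Finset.mul_sum]
        congr 1
        exact Finset.sum_congr rfl fun i _ => by ring

theorem exists_isCountingSeries_lattice {b : Fin d → ℕ} {c : Fin d → ℤ}
    (hc : ∀ i, b i = 0 → 0 < c i) :
    ∃ Q, IsCountingSeries Set.univ (fun k : Fin d → ℕ => ∑ i, k i * b i)
      (fun k => ∑ i, (k i : ℤ) * c i) Q := by
  obtain ⟨D, hD⟩ := exists_one_le_add_mul hc
  apply exists_isCountingSeries
  · intro B A
    refine (Set.finite_Iic fun _ => (A + D * B).toNat).subset ?_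
    rintro k ⟨-, hB, hA⟩ i
    dsimp only at hB hA
    subst hB hA
    have hk := sum_le_of_one_le_add_mul hD k
    have hi : (k i : ℤ) ≤ ∑ j, (k j : ℤ) :=
      Finset.single_le_sum (fun j _ => Int.natCast_nonneg (k j)) (Finset.mem_univ i)
    show k i ≤ Int.toNat _
    omega
  · refine fun B => ⟨-(D * B), ?_⟩
    rintro A ⟨k, -, rfl, rfl⟩
    have hk := sum_le_of_one_le_add_mul hD k
    have h0 : 0 ≤ ∑ j, (k j : ℤ) := Finset.sum_nonneg fun j _ => Int.natCast_nonneg (k j)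
    linarith

theorem univ_eq_image_cons_zero_union_image_add_single :
    (Set.univ : Set (Fin (d + 1) → ℕ)) =
      Fin.cons 0 '' Set.univ ∪ (fun k : Fin (d + 1) → ℕ => k + Pi.single 0 1) '' Set.univ := by
  refine (Set.eq_univ_of_forall fun k => ?_).symm
  rcases Nat.eq_zero_or_pos (k 0) with h | h
  · exact Or.inl ⟨Fin.tail k, trivial, by rw [← h, Fin.cons_self_tail]⟩
  · refine Or.inr ⟨k - Pi.single 0 1, trivial, funext fun i => ?_⟩
    by_cases hi : i = 0
    · subst hi
      simp only [Pi.add_apply, Pi.sub_apply, Pi.single_eq_same]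
      omega
    · simp [hi]

theorem IsCountingSeries.mul_prod_one_sub_eq_one {b : Fin d → ℕ} {c : Fin d → ℤ}
    (hc : ∀ i, b i = 0 → 0 < c i) {Q : PowerSeries RL}
    (hQ : IsCountingSeries Set.univ (fun k : Fin d → ℕ => ∑ i, k i * b i)
      (fun k => ∑ i, (k i : ℤ) * c i) Q) :
    Q * ∏ i, (1 - LTmonomial (c i) (b i)) = 1 := by
  induction d generalizing Q with
  | zero =>
    have h1 : IsCountingSeries Set.univ (fun k : Fin 0 → ℕ => ∑ i, k i * b i)
        (fun k => ∑ i, (k i : ℤ) * c i) 1 := by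
      rw [Set.univ_unique, ← LTmonomial_zero_zero]
      exact isCountingSeries_singleton _
    simp [hQ.unique h1]
  | succ d ih =>
    obtain ⟨Q', hQ'⟩ := exists_isCountingSeries_lattice (b := fun i => b i.succ)
      (c := fun i => c i.succ) fun i => hc i.succ
    have hsplit : Q' + LTmonomial (c 0) (b 0) * Q = Q := by
      refine IsCountingSeries.unique ?_ hQ
      rw [univ_eq_image_cons_zero_union_image_add_single]
      refine (hQ'.image (Fin.cons_right_injective 0).injOn
          (fun t => by simp [Fin.sum_univ_succ]) (fun t => by simp [Fin.sum_univ_succ])).union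
        ((hQ.monomial_mul _ _).image (add_left_injective _).injOn
          (fun k => by simp [add_mul, Finset.sum_add_distrib, Pi.single_apply, add_comm])
          (fun k => by simp [add_mul, Finset.sum_add_distrib, Pi.single_apply, add_comm])) ?_
      rw [Set.disjoint_iff]
      rintro _ ⟨⟨t, -, rfl⟩, ⟨k, -, hk⟩⟩
      simpa using congrFun hk 0
    have hfactor : Q * (1 - LTmonomial (c 0) (b 0)) = Q' := by linear_combination -hsplit
    rw [Fin.prod_univ_succ, ← mul_assoc, hfactor]
    exact ih (fun i => hc i.succ) hQ'

end Lattice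

theorem exists_natCast_add_mem_Ioc {R : Type*} [CommRing R] [LinearOrder R]
    [IsStrictOrderedRing R] [FloorSemiring R] {l : R} (hl : 0 < l) :
    ∃ k : ℕ, l - k ∈ Set.Ioc 0 1 := by
  have hceil : 1 ≤ ⌈l⌉₊ := Nat.ceil_pos.mpr hl
  refine ⟨⌈l⌉₊ - 1, ?_, ?_⟩ <;> rw [Nat.cast_sub hceil, Nat.cast_one]
  · linarith [Nat.ceil_lt_add_one hl.le]
  · linarith [Nat.le_ceil l]

theorem Nat.ceil_add_natCast_of_mem_Ioc {R : Type*} [CommRing R] [LinearOrder R]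
    [IsStrictOrderedRing R] [FloorSemiring R] {μ : R} (hμ : μ ∈ Set.Ioc 0 1) (k : ℕ) :
    ⌈μ + k⌉₊ = k + 1 := by
  rw [Nat.ceil_eq_iff k.succ_ne_zero, Nat.succ_sub_one, Nat.cast_succ]
  constructor <;> linarith [hμ.1, hμ.2]

section Cone

variable {M : Type*} [AddCommMonoid M]

theorem exists_add_eq_of_forall_le {f g : M →+ ℕ} (h : ∀ x, g x ≤ f x) : ∃ w, w + g = f :=
  ⟨{ toFun := fun x => f x - g x
     map_zero' := by simp
     map_add' := fun x y => by
       simp only [map_add]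
       have := h x
       have := h y
       omega },
   AddMonoidHom.ext fun x => Nat.sub_add_cancel (h x)⟩

theorem IsLocalAddHom.add_right {v : M →+ ℕ} (hv : IsLocalAddHom v) (w : M →+ ℕ) :
    IsLocalAddHom (v + w) := fun x hx => by
  have := hv x hx
  simp only [AddMonoidHom.add_apply]
  omega

theorem exists_le_mul_of_isLocalAddHom [AddMonoid.FG M] {v : M →+ ℕ} (hv : IsLocalAddHom v)
    (f : M →+ ℕ) : ∃ N : ℕ, ∀ x, f x ≤ N * v x := by
  obtain ⟨S, hS⟩ := AddMonoid.fg_def.mp ‹_›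
  refine ⟨∑ g ∈ S, f g, fun x => ?_⟩
  have hx : x ∈ AddSubmonoid.closure (S : Set M) := hS ▸ AddSubmonoid.mem_top x
  induction hx using AddSubmonoid.closure_induction with
  | mem g hg =>
    by_cases hvg : v g = 0
    · have hunit : IsAddUnit g := by_contra fun h => hv g h hvg
      simp [Nat.isAddUnit_iff.mp (hunit.map f)]
    · calc f g ≤ ∑ g ∈ S, f g := Finset.single_le_sum (fun _ _ => Nat.zero_le _) hg
        _ ≤ (∑ g ∈ S, f g) * v g := Nat.le_mul_of_pos_right _ (Nat.pos_of_ne_zero hvg)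
  | zero => simp
  | add x y _ _ hx hy =>
    simp only [map_add, mul_add]
    omega

theorem finite_setOf_forall_le [AddMonoid.FG M] (f : M →+ ℕ) :
    {v : M →+ ℕ | ∀ x, v x ≤ f x}.Finite := by
  classical
  obtain ⟨S, hS⟩ := AddMonoid.fg_def.mp ‹_›
  have hinj : Function.Injective fun (v : M →+ ℕ) (g : S) => v g := fun v w h =>
    AddMonoidHom.eq_of_eqOn_denseM hS fun g hg => congrFun h ⟨g, hg⟩
  exact ((Set.finite_Iic fun g : S => f g).preimage hinj.injOn).subset fun v hv g => hv g

variable {d : ℕ} (u : Fin d → (M →+ ℕ))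

def IsCoords (v : M →+ ℕ) (l : Fin d → ℚ) : Prop :=
  ∀ x, (v x : ℚ) = ∑ i, l i * (u i x : ℚ)

variable {u}

theorem IsCoords.unique (hli : LinearIndependent ℚ fun i x => (u i x : ℚ))
    {v : M →+ ℕ} {l l' : Fin d → ℚ} (h : IsCoords u v l) (h' : IsCoords u v l') : l = l' := by
  refine funext fun i => sub_eq_zero.mp (Fintype.linearIndependent_iff.mp hli (l - l') ?_ i)
  ext x
  simp only [Finset.sum_apply, Pi.smul_apply, Pi.sub_apply, smul_eq_mul, sub_mul,
    Finset.sum_sub_distrib, ← h x, ← h' x, sub_self, Pi.zero_apply]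

theorem IsCoords.add {v w : M →+ ℕ} {l l' : Fin d → ℚ} (h : IsCoords u v l)
    (h' : IsCoords u w l') : IsCoords u (v + w) (l + l') := fun x => by
  simp [h x, h' x, add_mul, Finset.sum_add_distrib]

theorem IsCoords.nsmul {v : M →+ ℕ} {l : Fin d → ℚ} (h : IsCoords u v l) (N : ℕ) :
    IsCoords u (N • v) (N • l) := fun x => by
  simp [h x, Finset.mul_sum, mul_assoc]

theorem isCoords_apply (j : Fin d) : IsCoords u (u j) (Pi.single j 1) := fun x => by
  simp [Pi.single_apply]

theorem isCoords_sum_nsmul (k : Fin d → ℕ) :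
    IsCoords u (∑ i, k i • u i) (fun i => k i) := fun x => by
  simp [AddMonoidHom.finsetSum_apply]

theorem IsCoords.pos_of_isLocalAddHom [AddMonoid.FG M]
    (hli : LinearIndependent ℚ fun i x => (u i x : ℚ))
    (hgen : ∀ v : M →+ ℕ, ∃ l, (∀ i, 0 ≤ l i) ∧ IsCoords u v l)
    {v : M →+ ℕ} {l : Fin d → ℚ} (hv : IsLocalAddHom v) (hl : IsCoords u v l) (j : Fin d) :
    0 < l j := by
  -- `N • v - u j` has nonnegative coordinates, so `N * l j ≥ 1`.
  obtain ⟨N, hN⟩ := exists_le_mul_of_isLocalAddHom hv (u j)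
  obtain ⟨w, hw⟩ := exists_add_eq_of_forall_le (f := N • v) (g := u j) (by simpa using hN)
  obtain ⟨ν, hν, hwν⟩ := hgen w
  have hcoord := (hl.nsmul N).unique hli (hw ▸ hwν.add (isCoords_apply j))
  have := congrFun hcoord j
  simp only [Pi.smul_apply, nsmul_eq_mul, Pi.add_apply, Pi.single_eq_same] at this
  nlinarith [hν j, (N.cast_nonneg : (0 : ℚ) ≤ N)]

theorem exists_mem_fundamentalPara_add_eq [AddMonoid.FG M]
    (hli : LinearIndependent ℚ fun i x => (u i x : ℚ))
    (hgen : ∀ v : M →+ ℕ, ∃ l, (∀ i, 0 ≤ l i) ∧ IsCoords u v l)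
    {v : M →+ ℕ} (hv : IsLocalAddHom v) :
    ∃ p ∈ fundamentalPara u, ∃ k : Fin d → ℕ, p + ∑ i, k i • u i = v := by
  obtain ⟨l, -, hl⟩ := hgen v
  choose k hk using fun i => exists_natCast_add_mem_Ioc (hl.pos_of_isLocalAddHom hli hgen hv i)
  have hle : ∀ x, (∑ i, k i • u i) x ≤ v x := fun x => by
    have : ((∑ i, k i • u i) x : ℚ) ≤ v x := by
      rw [isCoords_sum_nsmul k x, hl x]
      gcongr with i
      linarith [(hk i).1]
    exact_mod_cast this
  obtain ⟨p, rfl⟩ := exists_add_eq_of_forall_le hle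
  have hp : IsCoords u p (fun i => l i - k i) := fun x => by
    have := hl x
    rw [AddMonoidHom.add_apply, Nat.cast_add, isCoords_sum_nsmul k x] at this
    simp only [sub_mul, Finset.sum_sub_distrib]
    linarith
  refine ⟨p, ⟨fun x hx hpx => hv x hx ?_, _, hk, hp⟩, k, rfl⟩
  -- all coordinates of `p` are positive, so `p x = 0` forces `u i x = 0` for every `i`
  have hux : ∀ i, u i x = 0 := fun i => by
    have hsum := (hp x).symm.trans (by rw [hpx, Nat.cast_zero])
    have := (Finset.sum_eq_zero_iff_of_nonneg fun j _ =>
      mul_nonneg (hk j).1.le (Nat.cast_nonneg (u j x))).mp hsum i (Finset.mem_univ i)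
    exact_mod_cast (mul_eq_zero.mp this).resolve_left (hk i).1.ne'
  simp [hpx, AddMonoidHom.finsetSum_apply, hux]

theorem eq_and_eq_of_add_sum_nsmul_eq (hli : LinearIndependent ℚ fun i x => (u i x : ℚ))
    {p p' : M →+ ℕ} (hp : p ∈ fundamentalPara u) (hp' : p' ∈ fundamentalPara u)
    {k k' : Fin d → ℕ} (h : p + ∑ i, k i • u i = p' + ∑ i, k' i • u i) : p = p' ∧ k = k' := by
  obtain ⟨-, μ, hμ, hpμ⟩ := hp
  obtain ⟨-, μ', hμ', hpμ'⟩ := hp'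
  have hcoord := ((show IsCoords u p μ from hpμ).add (isCoords_sum_nsmul k)).unique hli
    (h ▸ (show IsCoords u p' μ' from hpμ').add (isCoords_sum_nsmul k'))
  -- `k i + 1` is the ceiling of the `i`-th coordinate, since `μ i ∈ (0, 1]`
  have hk : k = k' := funext fun i => by
    have := congrArg Nat.ceil (congrFun hcoord i)
    simp only [Pi.add_apply] at this
    rwa [Nat.ceil_add_natCast_of_mem_Ioc (hμ i), Nat.ceil_add_natCast_of_mem_Ioc (hμ' i),
      Nat.add_right_cancel_iff] at this
  subst hk
  exact ⟨AddMonoidHom.ext fun x => by simpa using DFunLike.congr_fun h x, rfl⟩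

theorem fundamentalPara_finite [AddMonoid.FG M] : (fundamentalPara u).Finite := by
  refine (finite_setOf_forall_le (∑ i, u i)).subset fun v ⟨_, l, hl, hvl⟩ x => ?_
  have : (v x : ℚ) ≤ ((∑ i, u i) x : ℕ) := by
    rw [hvl x, AddMonoidHom.finsetSum_apply, Nat.cast_sum]
    gcongr with i
    exact mul_le_of_le_one_left (Nat.cast_nonneg _) (hl i).2
  exact_mod_cast this

theorem setOf_isLocalAddHom_eq_biUnion [AddMonoid.FG M]
    (hli : LinearIndependent ℚ fun i x => (u i x : ℚ))
    (hgen : ∀ v : M →+ ℕ, ∃ l, (∀ i, 0 ≤ l i) ∧ IsCoords u v l) :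
    {v : M →+ ℕ | IsLocalAddHom v} =
      ⋃ p ∈ fundamentalPara u, (fun k : Fin d → ℕ => p + ∑ i, k i • u i) '' Set.univ := by
  ext v
  simp only [Set.mem_ofPred_eq, Set.mem_iUnion, Set.image_univ, Set.mem_range, exists_prop]
  constructor
  · exact exists_mem_fundamentalPara_add_eq hli hgen
  · rintro ⟨p, hp, k, rfl⟩
    exact hp.1.add_right _

end Cone

theorem eq_prod_inverse_of_mul_prod_eq_one {ι M₀ : Type*} [CommMonoidWithZero M₀]
    {s : Finset ι} {f : ι → M₀} {q : M₀} (h : q * ∏ i ∈ s, f i = 1) :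
    q = ∏ i ∈ s, Ring.inverse (f i) := by
  have hunit := IsUnit.prod_iff.mp (IsUnit.of_mul_eq_one_right q h)
  calc q = q * ∏ i ∈ s, (f i * Ring.inverse (f i)) := by
        rw [Finset.prod_congr rfl fun i hi => Ring.mul_inverse_cancel _ (hunit i hi),
          Finset.prod_const_one, mul_one]
    _ = _ := by rw [Finset.prod_mul_distrib, ← mul_assoc, h, one_mul]

theorem isLocalDualSeries_sum_mul {M : Type*} [AddCommMonoid M] [AddMonoid.FG M] {d : ℕ}
    {u : Fin d → (M →+ ℕ)}
    (hli : LinearIndependent ℚ fun i x => (u i x : ℚ))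
    (hgen : ∀ v : M →+ ℕ, ∃ l, (∀ i, 0 ≤ l i) ∧ IsCoords u v l)
    {P : Finset (M →+ ℕ)} (hP : ↑P = fundamentalPara u) (m₁ m₂ n : M) {Q : PowerSeries RL}
    (hQ : IsCountingSeries Set.univ (fun k : Fin d → ℕ => ∑ i, k i * u i n)
      (fun k => ∑ i, (k i : ℤ) * ((u i m₁ : ℤ) - u i m₂)) Q) :
    IsLocalDualSeries m₁ m₂ n ((∑ p ∈ P, LTmonomial ((p m₁ : ℤ) - p m₂) (p n)) * Q) := by
  rw [isLocalDualSeries_iff, setOf_isLocalAddHom_eq_biUnion hli hgen, ← hP,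
    Finset.set_biUnion_coe, Finset.sum_mul]
  refine IsCountingSeries.biUnion (fun p hp => (hQ.monomial_mul _ _).image ?_ ?_ ?_) ?_
  · exact fun k _ k' _ h => (eq_and_eq_of_add_sum_nsmul_eq hli (hP ▸ hp) (hP ▸ hp) h).2
  · intro k
    simp [AddMonoidHom.finsetSum_apply]
  · intro k
    simp only [AddMonoidHom.add_apply, AddMonoidHom.finsetSum_apply, AddMonoidHom.nsmul_apply,
      smul_eq_mul]
    push_cast
    simp only [mul_sub, Finset.sum_sub_distrib]
    ring
  · intro p hp p' hp' hne
    refine Set.disjoint_left.mpr ?_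
    rintro _ ⟨k, -, rfl⟩ ⟨k', -, h⟩
    exact hne (eq_and_eq_of_add_sum_nsmul_eq hli (hP ▸ hp') (hP ▸ hp) h).1.symm

theorem series_simplicial_formula_general (M : Type*) [AddCancelCommMonoid M] [AddMonoid.FG M]
    (d : ℕ) (m₁ m₂ n : M) (u : Fin d → (M →+ ℕ))
    (hindep : ∀ lam : Fin d → ℚ, (∀ x : M, ∑ i, lam i * (u i x : ℚ) = 0) → lam = 0)
    (hgen : ∀ v : M →+ ℕ, ∃ lam : Fin d → ℚ, (∀ i, 0 ≤ lam i) ∧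
      ∀ x : M, (v x : ℚ) = ∑ i, lam i * (u i x : ℚ))
    (hm : ∀ j : Fin d, u j n = 0 → (u j m₁ : ℤ) - (u j m₂ : ℤ) = 1) :
    ∃ Pfin : Finset (M →+ ℕ), (↑Pfin : Set (M →+ ℕ)) = fundamentalPara u ∧
      (∀ i : Fin d, IsUnit (1 - LTmonomial ((u i m₁ : ℤ) - (u i m₂ : ℤ)) (u i n))) ∧
      ∃ G : PowerSeries RL, IsLocalDualSeries m₁ m₂ n G ∧
        G = (∑ v ∈ Pfin, LTmonomial ((v m₁ : ℤ) - (v m₂ : ℤ)) (v n)) *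
          ∏ i : Fin d,
            Ring.inverse (1 - LTmonomial ((u i m₁ : ℤ) - (u i m₂ : ℤ)) (u i n)) := by
  have hli : LinearIndependent ℚ fun i x => (u i x : ℚ) :=
    Fintype.linearIndependent_iff.mpr fun l hl =>
      congrFun (hindep l fun x => by simpa using congrFun hl x)
  have hc : ∀ i, u i n = 0 → 0 < (u i m₁ : ℤ) - u i m₂ := fun i hi => by
    rw [hm i hi]
    exact one_pos
  obtain ⟨Q, hQ⟩ := exists_isCountingSeries_lattice hc
  have hQinv := hQ.mul_prod_one_sub_eq_one hc
  have hP := fundamentalPara_finite (u := u)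
  refine ⟨hP.toFinset, hP.coe_toFinset,
    IsUnit.prod_univ_iff.mp (IsUnit.of_mul_eq_one_right Q hQinv), _,
    isLocalDualSeries_sum_mul hli hgen hP.coe_toFinset m₁ m₂ n hQ, ?_⟩
  rw [← eq_prod_inverse_of_mul_prod_eq_one hQinv]

/-- Let `M` be a sharp, fine and saturated monoid of dimension `d` whose dual `M^∨` is
simplicial: it has exactly `d` one-dimensional faces, with generators `u 1, …, u d` that are
`ℚ`-linearly independent and rationally generate the cone of `M^∨`.  Let `m = m₁ - m₂ ∈ M^gp`
and `n ∈ M ∖ {0}`, and assume `u j ^gp(m) = 1` whenever `u j (n) = 0`.  Then the fundamental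
parallelepiped `P` is finite, each `1 - L^{-u i ^gp(m)} T^{u i (n)}` is invertible in
`ℤ((L⁻¹))[[T]]`, and
`Σ_{u ∈ M^{∨,loc}} L^{-u^gp(m)} T^{u(n)}
  = (Σ_{u ∈ P} L^{-u^gp(m)} T^{u(n)}) · Π_i (1 - L^{-u i ^gp(m)} T^{u i (n)})⁻¹`. -/
theorem series_simplicial_formula (M : Type*) [AddCancelCommMonoid M] [AddMonoid.FG M]
    (hsharp : ∀ x : M, IsAddUnit x → x = 0) (hsat : IsSaturatedAddMonoid M)
    (d : ℕ) (hdim : Nonempty (GrpOf M ≃+ (Fin d → ℤ)))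
    (m₁ m₂ n : M) (hn : n ≠ 0)
    (u : Fin d → (M →+ ℕ)) (hinj : Function.Injective u)
    (hfaces : ∀ F : AddSubmonoid (M →+ ℕ),
      IsOneDimFace F ↔ ∃ i : Fin d, F = AddSubmonoid.multiples (u i))
    (hindep : ∀ lam : Fin d → ℚ, (∀ x : M, ∑ i, lam i * (u i x : ℚ) = 0) → lam = 0)
    (hgen : ∀ v : M →+ ℕ, ∃ lam : Fin d → ℚ, (∀ i, 0 ≤ lam i) ∧
      ∀ x : M, (v x : ℚ) = ∑ i, lam i * (u i x : ℚ))
    (hm : ∀ j : Fin d, u j n = 0 → (u j m₁ : ℤ) - (u j m₂ : ℤ) = 1) :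
    ∃ Pfin : Finset (M →+ ℕ), (↑Pfin : Set (M →+ ℕ)) = fundamentalPara u ∧
      (∀ i : Fin d, IsUnit (1 - LTmonomial ((u i m₁ : ℤ) - (u i m₂ : ℤ)) (u i n))) ∧
      ∃ G : PowerSeries RL, IsLocalDualSeries m₁ m₂ n G ∧
        G = (∑ v ∈ Pfin, LTmonomial ((v m₁ : ℤ) - (v m₂ : ℤ)) (v n)) *
          ∏ i : Fin d,
            Ring.inverse (1 - LTmonomial ((u i m₁ : ℤ) - (u i m₂ : ℤ)) (u i n)) :=
  series_simplicial_formula_general M d m₁ m₂ n u hindep hgen hm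
end

section
/- Let M be a sharp, fine and saturated monoid of dimension d whose dual monoid M^∨ = Hom(M, ℕ) is simplicial: it has exactly d one-dimensional faces, whose generators u_1, …, u_d are linearly independent in Hom(M^gp, ℤ) ⊗ ℚ and rationally generate the cone of M^∨ (every element of M^∨ is a non-negative rational linear combination of u_1, …, u_d). Let P = {λ_1 u_1 + ⋯ + λ_d u_d ∈ M^{∨,loc} : λ_i ∈ ℚ, 0 < λ_i ≤ 1} be the fundamental parallelepiped. Then every local morphism u ∈ M^{∨,loc} can be written uniquely in the form u = p + a_1 u_1 + ⋯ + a_d u_d with p ∈ P and a_1, …, a_d ∈ ℕ. -/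
/-!
Write a local `v` in rational coordinates `v = ∑ λᵢ uᵢ`. Finite generation of `M` gives
`uᵢ ≤ k v` for some `k`, and expanding `k v = uᵢ + w` in coordinates (with `w ∈ M^∨` having
non-negative coordinates) forces `λᵢ > 0`. The decomposition is then `aᵢ = ⌈λᵢ⌉ - 1` and
`p = v - ∑ aᵢ uᵢ`; it is unique because the coordinates `λᵢ = μᵢ + aᵢ` with `μᵢ ∈ (0, 1]`
determine `aᵢ`.
-/

theorem existsUnique_nat_lt_le_add_one {α : Type*} [Semiring α] [LinearOrder α]
    [IsStrictOrderedRing α] [FloorSemiring α] {x : α} (hx : 0 < x) :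
    ∃! n : ℕ, (n : α) < x ∧ x ≤ n + 1 := by
  have hceil : 1 ≤ ⌈x⌉₊ := Nat.ceil_pos.2 hx
  refine ⟨⌈x⌉₊ - 1, ⟨Nat.lt_ceil.1 (by omega), ?_⟩, ?_⟩
  · rw [← Nat.cast_add_one, Nat.sub_add_cancel hceil]
    exact Nat.le_ceil x
  · rintro m ⟨hmx, hxm⟩
    have hm : ⌈x⌉₊ ≤ m + 1 := Nat.ceil_le.2 (by exact_mod_cast hxm)
    have := Nat.lt_ceil.2 hmx
    omega

theorem AddMonoidHom.exists_eq_add_of_forall_le {M : Type*} [AddCommMonoid M]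
    {f g : M →+ ℕ} (h : ∀ x, g x ≤ f x) : ∃ w : M →+ ℕ, f = g + w := by
  refine ⟨⟨⟨fun x => f x - g x, by simp⟩, fun x y => ?_⟩, ?_⟩
  · have := h x
    have := h y
    simp only [map_add]
    omega
  · ext x
    exact (Nat.add_sub_cancel' (h x)).symm

theorem IsLocalAddHom.exists_le_mul {M : Type*} [AddCommMonoid M] [AddMonoid.FG M]
    {v : M →+ ℕ} (hv : IsLocalAddHom v) (w : M →+ ℕ) : ∃ k : ℕ, ∀ x, w x ≤ k * v x := by
  obtain ⟨S, hS⟩ := AddMonoid.FG.fg_top (M := M)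
  refine ⟨∑ s ∈ S, w s, fun x => ?_⟩
  induction hS ▸ AddSubmonoid.mem_top x using AddSubmonoid.closure_induction with
  | mem s hs =>
    by_cases hvs : v s = 0
    · have hunit : IsAddUnit s := by_contra fun h => hv s h hvs
      simp [Nat.isAddUnit_iff.1 (hunit.map w)]
    · calc w s ≤ ∑ t ∈ S, w t := Finset.single_le_sum (by simp) hs
        _ ≤ _ := Nat.le_mul_of_pos_right _ (Nat.pos_of_ne_zero hvs)
  | zero => simp
  | add y z _ _ hy hz => rw [map_add, map_add, mul_add]; omega

section RatCoords

variable {M ι : Type*} [AddCommMonoid M] [Fintype ι]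

def IsRatCoords (u : ι → M →+ ℕ) (v : M →+ ℕ) (lam : ι → ℚ) : Prop :=
  ∀ x : M, (v x : ℚ) = ∑ i, lam i * (u i x : ℚ)

variable {u : ι → M →+ ℕ} {v w : M →+ ℕ} {lam mu : ι → ℚ}

theorem IsRatCoords.add (hv : IsRatCoords u v lam) (hw : IsRatCoords u w mu) :
    IsRatCoords u (v + w) (lam + mu) := by
  intro x
  simp only [AddMonoidHom.add_apply, Nat.cast_add, Pi.add_apply, add_mul,
    Finset.sum_add_distrib, hv x, hw x]

theorem IsRatCoords.nsmul (hv : IsRatCoords u v lam) (k : ℕ) :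
    IsRatCoords u (k • v) (k • lam) := by
  intro x
  simp [hv x, Finset.mul_sum, mul_assoc]

theorem isRatCoords_self [DecidableEq ι] (i : ι) : IsRatCoords u (u i) (Pi.single i 1) := by
  intro x
  simp [Pi.single_apply]

theorem isRatCoords_sum_nsmul (a : ι → ℕ) :
    IsRatCoords u (∑ i, a i • u i) (fun i => (a i : ℚ)) := by
  intro x
  simp

theorem IsRatCoords.apply_le_apply (hv : IsRatCoords u v lam) (hw : IsRatCoords u w mu)
    (h : lam ≤ mu) (x : M) : v x ≤ w x := by
  have : (v x : ℚ) ≤ w x := by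
    rw [hv x, hw x]
    gcongr with i
    exact h i
  exact_mod_cast this

theorem IsRatCoords.apply_eq_zero_iff (hv : IsRatCoords u v lam) (hpos : ∀ i, 0 < lam i)
    (x : M) : v x = 0 ↔ ∀ i, u i x = 0 := by
  rw [← Nat.cast_eq_zero (R := ℚ), hv x,
    Finset.sum_eq_zero_iff_of_nonneg fun i _ => mul_nonneg (hpos i).le (Nat.cast_nonneg _)]
  simp [(hpos _).ne']

theorem IsRatCoords.unique
    (hindep : ∀ lam : ι → ℚ, (∀ x : M, ∑ i, lam i * (u i x : ℚ) = 0) → lam = 0)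
    (hlam : IsRatCoords u v lam) (hmu : IsRatCoords u v mu) : lam = mu := by
  rw [← sub_eq_zero]
  refine hindep _ fun x => ?_
  simp only [Pi.sub_apply, sub_mul, Finset.sum_sub_distrib, ← hlam x, ← hmu x, sub_self]

theorem IsRatCoords.pos_of_isLocalAddHom [AddMonoid.FG M]
    (hindep : ∀ lam : ι → ℚ, (∀ x : M, ∑ i, lam i * (u i x : ℚ) = 0) → lam = 0)
    (hgen : ∀ w : M →+ ℕ, ∃ nu : ι → ℚ, (∀ i, 0 ≤ nu i) ∧ IsRatCoords u w nu)
    (hv : IsLocalAddHom v) (hlam : IsRatCoords u v lam) (i : ι) : 0 < lam i := by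
  classical
  obtain ⟨k, hk⟩ := hv.exists_le_mul (u i)
  obtain ⟨w, hw⟩ := AddMonoidHom.exists_eq_add_of_forall_le (f := k • v) (g := u i)
    (by simpa using hk)
  obtain ⟨nu, hnu, hwnu⟩ := hgen w
  have hcoords : k • lam = Pi.single i 1 + nu :=
    (hlam.nsmul k).unique hindep (hw ▸ (isRatCoords_self i).add hwnu)
  have hcoord : k * lam i = 1 + nu i := by
    simpa using congrFun hcoords i
  by_contra! hle
  nlinarith [hnu i, (Nat.cast_nonneg k : (0 : ℚ) ≤ k)]

end RatCoords

section FundamentalPara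

variable {M : Type*} [AddCommMonoid M] {d : ℕ} {u : Fin d → M →+ ℕ} {v p : M →+ ℕ}
  {lam : Fin d → ℚ}

theorem IsRatCoords.exists_mem_fundamentalPara_eq_add
    (hindep : ∀ lam : Fin d → ℚ, (∀ x : M, ∑ i, lam i * (u i x : ℚ) = 0) → lam = 0)
    (hgen : ∀ w : M →+ ℕ, ∃ nu : Fin d → ℚ, (∀ i, 0 ≤ nu i) ∧ IsRatCoords u w nu)
    (hv : IsLocalAddHom v) (hlam : IsRatCoords u v lam) (a : Fin d → ℕ)
    (ha : ∀ i, (a i : ℚ) < lam i ∧ lam i ≤ a i + 1) :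
    ∃ p ∈ fundamentalPara u, v = p + ∑ i, a i • u i := by
  obtain ⟨p, hp⟩ := AddMonoidHom.exists_eq_add_of_forall_le
    ((isRatCoords_sum_nsmul a).apply_le_apply hlam fun i => (ha i).1.le)
  obtain ⟨mu, -, hmu⟩ := hgen p
  have hcoords : lam = (fun i => (a i : ℚ)) + mu :=
    hlam.unique hindep (hp ▸ (isRatCoords_sum_nsmul a).add hmu)
  have hmu_mem : ∀ i, 0 < mu i ∧ mu i ≤ 1 := fun i => by
    have hi := congrFun hcoords i
    simp only [Pi.add_apply] at hi
    constructor <;> linarith [ha i]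
  have hlam_pos : ∀ i, 0 < lam i := fun i => (Nat.cast_nonneg _).trans_lt (ha i).1
  refine ⟨p, ⟨fun x hx hpx => hv x hx ?_, mu, hmu_mem, hmu⟩, by rw [hp, add_comm]⟩
  exact (hlam.apply_eq_zero_iff hlam_pos x).2
    ((hmu.apply_eq_zero_iff (fun i => (hmu_mem i).1) x).1 hpx)

theorem IsRatCoords.lt_le_add_one_of_eq_add
    (hindep : ∀ lam : Fin d → ℚ, (∀ x : M, ∑ i, lam i * (u i x : ℚ) = 0) → lam = 0)
    (hlam : IsRatCoords u v lam) (hp : p ∈ fundamentalPara u) {a : Fin d → ℕ}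
    (hv : v = p + ∑ i, a i • u i) (i : Fin d) : (a i : ℚ) < lam i ∧ lam i ≤ a i + 1 := by
  obtain ⟨-, mu, hmu, hpmu : IsRatCoords u p mu⟩ := hp
  have hi := congrFun (hlam.unique hindep (hv ▸ hpmu.add (isRatCoords_sum_nsmul a))) i
  simp only [Pi.add_apply] at hi
  constructor <;> linarith [hmu i]

end FundamentalPara

theorem local_decomposition_parallelepiped_general (M : Type*) [AddCancelCommMonoid M]
    [AddMonoid.FG M]
    (d : ℕ)
    (u : Fin d → (M →+ ℕ))
    (hindep : ∀ lam : Fin d → ℚ, (∀ x : M, ∑ i, lam i * (u i x : ℚ) = 0) → lam = 0)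
    (hgen : ∀ v : M →+ ℕ, ∃ lam : Fin d → ℚ, (∀ i, 0 ≤ lam i) ∧
      ∀ x : M, (v x : ℚ) = ∑ i, lam i * (u i x : ℚ)) :
    ∀ v : M →+ ℕ, IsLocalAddHom v →
      ∃! pa : (M →+ ℕ) × (Fin d → ℕ), pa.1 ∈ fundamentalPara u ∧
        v = pa.1 + ∑ i : Fin d, pa.2 i • u i := by
  intro v hv
  obtain ⟨lam, -, hlam : IsRatCoords u v lam⟩ := hgen v
  have hpos := hlam.pos_of_isLocalAddHom hindep hgen hv
  choose a ha ha_unique using fun i => existsUnique_nat_lt_le_add_one (hpos i)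
  obtain ⟨p, hp, hvp⟩ := hlam.exists_mem_fundamentalPara_eq_add hindep hgen hv a ha
  refine ⟨(p, a), ⟨hp, hvp⟩, ?_⟩
  rintro ⟨q, b⟩ ⟨hq, hvq⟩
  obtain rfl : b = a := funext fun i =>
    ha_unique i _ (hlam.lt_le_add_one_of_eq_add hindep hq hvq i)
  obtain rfl : q = p := add_right_cancel (hvq.symm.trans hvp)
  rfl

/-- Let `M` be a sharp, fine and saturated monoid of dimension `d` whose dual `M^∨` is
simplicial: it has exactly `d` one-dimensional faces, with generators `u 1, …, u d` that are
`ℚ`-linearly independent and rationally generate the cone of `M^∨`.  Then every local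
morphism `v ∈ M^{∨,loc}` can be written uniquely as `v = p + a₁ • u 1 + ⋯ + a_d • u d` with
`p` in the fundamental parallelepiped `P` and `a i ∈ ℕ`. -/
theorem local_decomposition_parallelepiped (M : Type*) [AddCancelCommMonoid M]
    [AddMonoid.FG M]
    (hsharp : ∀ x : M, IsAddUnit x → x = 0) (hsat : IsSaturatedAddMonoid M)
    (d : ℕ) (hdim : Nonempty (GrpOf M ≃+ (Fin d → ℤ)))
    (u : Fin d → (M →+ ℕ)) (hinj : Function.Injective u)
    (hfaces : ∀ F : AddSubmonoid (M →+ ℕ),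
      IsOneDimFace F ↔ ∃ i : Fin d, F = AddSubmonoid.multiples (u i))
    (hindep : ∀ lam : Fin d → ℚ, (∀ x : M, ∑ i, lam i * (u i x : ℚ) = 0) → lam = 0)
    (hgen : ∀ v : M →+ ℕ, ∃ lam : Fin d → ℚ, (∀ i, 0 ≤ lam i) ∧
      ∀ x : M, (v x : ℚ) = ∑ i, lam i * (u i x : ℚ)) :
    ∀ v : M →+ ℕ, IsLocalAddHom v →
      ∃! pa : (M →+ ℕ) × (Fin d → ℕ), pa.1 ∈ fundamentalPara u ∧
        v = pa.1 + ∑ i : Fin d, pa.2 i • u i :=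
  local_decomposition_parallelepiped_general M d u hindep hgen
end
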